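/- (Uniqueness of the formal solution of the one-dimensional Virasoro constraints.) Let s ∈ ℂ and let ρ(L_k) for k ≥ -1 be the operators on ℂ[[t_1,t_3,…]] given by ρ(L_{-1}) = s∂_{t_1} + (1/4)t_1² + Σ_j (j/2)t_{j+2}∂_{t_j}, ρ(L_0) = s∂_{t_3} + Σ_j (j/2)t_j∂_{t_j} + 1/16, ρ(L_k) = s∂_{t_{2k+3}} + (1/4)Σ_{j=1}^{2k-1}∂_{t_j}∂_{t_{2k-j}} + Σ_j (j/2)t_j∂_{t_{2k+j}} for k ≥ 1 (all indices j odd). If s = 0, then there is no τ ∈ ℂ[[t_1,t_3,…]] with τ(0) = 1 and ρ(L_k)τ = 0 for all k ≥ -1. If s ≠ 0, there is at most one such τ. -/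

import Mathlib

/-- The formal power series ring `ℂ[[t_1, t_3, t_5, …]]` (variables indexed by odd
positive integers, `n ↦ t_{2n+1}`), modelled via its coefficients: a series is a
function from monomials `ℕ →₀ ℕ` to `ℂ`. -/
abbrev FormalV : Type := (ℕ →₀ ℕ) → ℂ

/-- The derivative `∂_{t_{2n+1}}`, coefficientwise:
`(∂ f)(m) = (m(n) + 1) · f(m + e_n)`. -/
noncomputable def Dv (n : ℕ) : FormalV →ₗ[ℂ] FormalV where
  toFun f m := ((m n : ℕ) + 1 : ℂ) * f (m + Finsupp.single n 1)
  map_add' f g := by funext m; simp [mul_add]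
  map_smul' c f := by funext m; simp; ring

/-- The operator `t_{2a+1} ∂_{t_{2b+1}}`, coefficientwise. -/
noncomputable def XDv (a b : ℕ) : FormalV →ₗ[ℂ] FormalV where
  toFun f m :=
    if 1 ≤ m a then
      ((((m - Finsupp.single a 1 : ℕ →₀ ℕ) b : ℕ) : ℂ) + 1)
        * f (m - Finsupp.single a 1 + Finsupp.single b 1)
    else 0
  map_add' f g := by funext m; by_cases h : 1 ≤ m a <;> simp [h, mul_add]
  map_smul' c f := by funext m; by_cases h : 1 ≤ m a <;> simp [h] <;> ring

/-- Multiplication by `t_1²`, coefficientwise. -/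
noncomputable def Xsq : FormalV →ₗ[ℂ] FormalV where
  toFun f m := if 2 ≤ m 0 then f (m - Finsupp.single 0 2) else 0
  map_add' f g := by funext m; by_cases h : 2 ≤ m 0 <;> simp [h]
  map_smul' c f := by funext m; by_cases h : 2 ≤ m 0 <;> simp [h]

/-- The (locally finite) infinite sum `Σ_n c(n) · t_{2(a n)+1} ∂_{t_{2(b n)+1}}`,
well defined whenever `a n ≥ n` so that for a fixed monomial only finitely many
summands are nonzero. -/
noncomputable def sumXDv (a b : ℕ → ℕ) (c : ℕ → ℂ) : FormalV →ₗ[ℂ] FormalV where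
  toFun f m := ∑ n ∈ Finset.range (m.support.sup id + 1), c n * XDv (a n) (b n) f m
  map_add' f g := by
    funext m
    simp [map_add, Finset.sum_add_distrib, mul_add]
  map_smul' r f := by
    funext m
    simp [Finset.mul_sum]
    apply Finset.sum_congr rfl
    intros
    ring

/-- The Virasoro operators `ρ(L_k)`, `k ≥ -1`, of the one-dimensional situation
(equation (eq:rhoWK)):
`ρ(L_{-1}) = s ∂_{t_1} + (1/4) t_1² + Σ_{j odd} (j/2) t_{j+2} ∂_{t_j}`,
`ρ(L_0) = s ∂_{t_3} + Σ_{j odd} (j/2) t_j ∂_{t_j} + 1/16`, and for `k ≥ 1`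
`ρ(L_k) = s ∂_{t_{2k+3}} + (1/4) Σ_{j=1,odd}^{2k-1} ∂_{t_j} ∂_{t_{2k-j}}
 + Σ_{j odd} (j/2) t_j ∂_{t_{2k+j}}`. -/
noncomputable def rhoV (s : ℂ) (k : ℤ) : FormalV →ₗ[ℂ] FormalV :=
  if k = -1 then
    s • Dv 0 + ((1 : ℂ)/4) • Xsq
      + sumXDv (fun n => n + 1) (fun n => n) (fun n => ((2 * n + 1 : ℕ) : ℂ)/2)
  else if k = 0 then
    s • Dv 1 + sumXDv id id (fun n => ((2 * n + 1 : ℕ) : ℂ)/2)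
      + ((1 : ℂ)/16) • LinearMap.id
  else
    s • Dv (k.toNat + 1)
      + ((1 : ℂ)/4) • (∑ n ∈ Finset.range k.toNat, Dv n ∘ₗ Dv (k.toNat - 1 - n))
      + sumXDv id (fun n => n + k.toNat) (fun n => ((2 * n + 1 : ℕ) : ℂ)/2)

/-!
Grade `ℂ[[t_1, t_3, …]]` by `deg t_{2n+1} = 2n + 1`. The coefficient of `t^m` in `ρ(L_{n-1}) f`
is `s (m_n + 1)` times the coefficient of `t^m t_{2n+1}` in `f`, plus coefficients of `f` in
degrees strictly below `deg m + 2n + 1`. Since every monomial of positive degree has the form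
`t^m t_{2n+1}`, for `s ≠ 0` the constraints determine a solution degree by degree from its
constant term, so the difference of two solutions vanishes. For `s = 0` the coefficient of
`t_1²` in `ρ(L_{-1}) τ` is `τ(0) / 4`, which contradicts `τ(0) = 1`.
-/

noncomputable abbrev degV : (ℕ →₀ ℕ) →+ ℕ := Finsupp.weight fun n => 2 * n + 1

@[simp]
lemma degV_single (n k : ℕ) : degV (Finsupp.single n k) = k * (2 * n + 1) :=
  Finsupp.weight_single _ n k

lemma degV_sub_single_add {m : ℕ →₀ ℕ} {n : ℕ} (h : m n ≠ 0) :
    degV (m - Finsupp.single n 1) + (2 * n + 1) = degV m :=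
  Finsupp.weight_sub_single_add h

lemma Dv_apply (n : ℕ) (f : FormalV) (m : ℕ →₀ ℕ) :
    Dv n f m = ((m n : ℂ) + 1) * f (m + Finsupp.single n 1) :=
  rfl

def VanishesBelow (f : FormalV) (D : ℕ) : Prop := ∀ m, degV m < D → f m = 0

section VanishesBelow

variable {s : ℂ} {f : FormalV} {D : ℕ} {m : ℕ →₀ ℕ}

lemma XDv_apply_eq_zero (hf : VanishesBelow f D) {a b : ℕ}
    (h : degV m + 2 * b < D + 2 * a) : XDv a b f m = 0 := by
  change ite _ _ _ = 0
  split_ifs with ha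
  · have hsub := degV_sub_single_add (m := m) (n := a) (by omega)
    rw [hf _ (by rw [map_add, degV_single]; omega), mul_zero]
  · rfl

lemma sumXDv_apply_eq_zero (hf : VanishesBelow f D) {a b : ℕ → ℕ} (c : ℕ → ℂ)
    (h : ∀ n, degV m + 2 * b n < D + 2 * a n) : sumXDv a b c f m = 0 := by
  simp only [sumXDv, LinearMap.coe_mk, AddHom.coe_mk]
  exact Finset.sum_eq_zero fun n _ => by rw [XDv_apply_eq_zero hf (h n), mul_zero]

lemma Xsq_apply_eq_zero (hf : VanishesBelow f D) (h : degV m < D + 2) :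
    Xsq f m = 0 := by
  change ite _ _ _ = 0
  split_ifs with h2
  · have hsplit : m - Finsupp.single 0 2 + Finsupp.single 0 2 = m :=
      tsub_add_cancel_of_le (Finsupp.single_le_iff.mpr h2)
    apply hf
    rw [← hsplit, map_add, degV_single] at h
    omega
  · rfl

lemma Dv_comp_Dv_apply_eq_zero (hf : VanishesBelow f D) {a b : ℕ}
    (h : degV m + 2 * a + 2 * b + 2 < D) : (Dv a ∘ₗ Dv b) f m = 0 := by
  rw [LinearMap.comp_apply, Dv_apply, Dv_apply, hf, mul_zero, mul_zero]
  simp only [map_add, degV_single]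
  omega

lemma rhoV_neg_one_apply_of_vanishesBelow (hf : VanishesBelow f (degV m + 1)) :
    rhoV s (-1) f m = s * ((m 0 : ℂ) + 1) * f (m + Finsupp.single 0 1) := by
  rw [rhoV, if_pos rfl]
  simp only [LinearMap.add_apply, LinearMap.smul_apply, Pi.add_apply, Pi.smul_apply,
    smul_eq_mul]
  rw [Xsq_apply_eq_zero hf (by omega), sumXDv_apply_eq_zero hf _ fun n => by omega]
  rw [Dv_apply]
  ring

lemma rhoV_zero_apply_of_vanishesBelow (hf : VanishesBelow f (degV m + 3)) :
    rhoV s 0 f m = s * ((m 1 : ℂ) + 1) * f (m + Finsupp.single 1 1) := by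
  rw [rhoV, if_neg (by norm_num), if_pos rfl]
  simp only [LinearMap.add_apply, LinearMap.smul_apply, Pi.add_apply, Pi.smul_apply,
    smul_eq_mul, LinearMap.id_apply]
  rw [hf m (by omega), sumXDv_apply_eq_zero hf _ fun n => by omega]
  rw [Dv_apply]
  ring

lemma rhoV_natCast_apply_of_vanishesBelow {k : ℕ} (hk : k ≠ 0)
    (hf : VanishesBelow f (degV m + 2 * k + 3)) :
    rhoV s k f m = s * ((m (k + 1) : ℂ) + 1) * f (m + Finsupp.single (k + 1) 1) := by
  rw [rhoV, if_neg (by omega), if_neg (by omega), Int.toNat_natCast]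
  simp only [LinearMap.add_apply, LinearMap.smul_apply, Pi.add_apply, Pi.smul_apply,
    smul_eq_mul, LinearMap.coe_sum, Finset.sum_apply]
  rw [Finset.sum_eq_zero fun n hn => Dv_comp_Dv_apply_eq_zero hf (by simp at hn; omega),
    sumXDv_apply_eq_zero hf _ fun n => by simp; omega]
  rw [Dv_apply]
  ring

lemma rhoV_apply_of_vanishesBelow (n : ℕ) (hf : VanishesBelow f (degV m + 2 * n + 1)) :
    rhoV s (n - 1) f m = s * ((m n : ℂ) + 1) * f (m + Finsupp.single n 1) := by
  match n, hf with
  | 0, hf => exact rhoV_neg_one_apply_of_vanishesBelow hf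
  | 1, hf => exact rhoV_zero_apply_of_vanishesBelow hf
  | k + 2, hf =>
    have hk : ((k + 2 : ℕ) : ℤ) - 1 = (k + 1 : ℕ) := by push_cast; ring
    rw [hk]
    exact rhoV_natCast_apply_of_vanishesBelow k.succ_ne_zero (by convert hf using 1; omega)

lemma VanishesBelow.succ (hs : s ≠ 0) (h0 : f 0 = 0)
    (hρ : ∀ k : ℤ, -1 ≤ k → rhoV s k f = 0) (hD : VanishesBelow f D) :
    VanishesBelow f (D + 1) := by
  intro m hm
  obtain hlt | rfl := Nat.lt_succ_iff_lt_or_eq.mp hm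
  · exact hD m hlt
  obtain rfl | hm0 := eq_or_ne m 0
  · exact h0
  obtain ⟨n, hn⟩ : ∃ n, m n ≠ 0 := by simpa [Finsupp.ext_iff] using hm0
  have hdeg := degV_sub_single_add hn
  have key := rhoV_apply_of_vanishesBelow (s := s) n (m := m - Finsupp.single n 1)
    (by rw [add_assoc, hdeg]; exact hD)
  rw [hρ _ (by omega), Finsupp.sub_add_single_one_cancel hn] at key
  exact (mul_eq_zero.mp key.symm).resolve_left (mul_ne_zero hs (Nat.cast_add_one_ne_zero _))

lemma eq_zero_of_rhoV_eq_zero (hs : s ≠ 0) (h0 : f 0 = 0)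
    (hρ : ∀ k : ℤ, -1 ≤ k → rhoV s k f = 0) : f = 0 := by
  have hvan : ∀ D, VanishesBelow f D := fun D => by
    induction D with
    | zero => exact fun m hm => absurd hm (Nat.not_lt_zero _)
    | succ D ih => exact ih.succ hs h0 hρ
  funext m
  exact hvan (degV m + 1) m (Nat.lt_succ_self _)

end VanishesBelow

lemma rhoV_zero_neg_one_apply_single_zero_two (f : FormalV) :
    rhoV 0 (-1) f (Finsupp.single 0 2) = f 0 / 4 := by
  rw [rhoV, if_pos rfl]
  simp [Xsq, sumXDv, XDv, div_eq_inv_mul]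

/-- Lemma 3.9 (lem:uniquenesTauVirasoro): if `s = 0` the Virasoro constraints
`ρ(L_k) τ = 0` (`k ≥ -1`) with `τ(0) = 1` have no solution in `ℂ[[t_1,t_3,…]]`;
if `s ≠ 0` they have at most one solution. -/
theorem virasoro_solution_unique (s : ℂ) :
    (s = 0 → ¬ ∃ τ : FormalV, τ 0 = 1 ∧ ∀ k : ℤ, -1 ≤ k → rhoV s k τ = 0) ∧
    (s ≠ 0 → ∀ τ₁ τ₂ : FormalV,
      (τ₁ 0 = 1 ∧ ∀ k : ℤ, -1 ≤ k → rhoV s k τ₁ = 0) →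
      (τ₂ 0 = 1 ∧ ∀ k : ℤ, -1 ≤ k → rhoV s k τ₂ = 0) →
      τ₁ = τ₂) := by
  constructor
  · rintro rfl ⟨τ, hτ0, hτ⟩
    have h := rhoV_zero_neg_one_apply_single_zero_two τ
    rw [hτ (-1) le_rfl, hτ0] at h
    norm_num at h
  · rintro hs τ₁ τ₂ ⟨h₁0, h₁⟩ ⟨h₂0, h₂⟩
    refine sub_eq_zero.mp (eq_zero_of_rhoV_eq_zero hs ?_ fun k hk => ?_)
    · simp [h₁0, h₂0]
    · rw [map_sub, h₁ k hk, h₂ k hk, sub_zero]
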